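/- arXiv:2401.07767 — 3 statements merged into one kernel-verified Lean document; each statement's English description precedes it below -/
import Mathlib

section
/- The minimizer of θ ↦ (1/2)(x - θ)² + P(θ), where P is the MCP penalty P(θ) = λ∫₀^|θ| (1 - t/(γλ))₊ dt with λ > 0 and γ > 1, equals (γ/(γ-1))·sign(x)·(|x|-λ)₊ when |x| ≤ λγ, and equals x when |x| > λγ. -/
/-!
Integrating gives the closed form `P(θ) = γλ²/2 - (γλ - |θ|)₊² / (2γ)`.

If `|x| > γλ`, then `(γλ - |θ|)₊ ≤ |x - θ|`, so `P(x) - P(θ)` is at most `(x - θ)² / (2γ)`, which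
`γ > 1` absorbs into `(x - θ)² / 2`.

If `|x| ≤ γλ`, replacing `(x, θ)` by `(|x|, |θ|)` does not increase the objective, and bounding
`(γλ - t)₊²` by `(γλ - t)²` makes it the convex quadratic `(1 - 1/γ) t² / 2 - (|x| - λ) t + const`
in `t = |θ| ≥ 0`. Its minimiser on `[0, ∞)` is `γ (|x| - λ)₊ / (γ - 1)`, which lies in `[0, γλ]`
where the bound is an equality.
-/

open Real Set

/-- The MCP penalty `P^MCP_{λ,γ}(x) = λ ∫₀^{|x|} max(1 - t/(γλ), 0) dt`. -/
noncomputable def mcp (lam gam : ℝ) (x : ℝ) : ℝ :=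
  lam * ∫ t in (0:ℝ)..|x|, max (1 - t / (gam * lam)) 0

lemma integral_max_one_sub_div_of_le {b c : ℝ} (hc : 0 < c) (hb : 0 ≤ b) (hbc : b ≤ c) :
    ∫ t in (0:ℝ)..b, max (1 - t / c) 0 = b - b ^ 2 / (2 * c) := by
  have hpos : EqOn (fun t => max (1 - t / c) 0) (fun t => 1 - t / c) (uIcc 0 b) := by
    intro t ht
    rw [uIcc_of_le hb] at ht
    exact max_eq_left (sub_nonneg.mpr ((div_le_one hc).mpr (ht.2.trans hbc)))
  rw [intervalIntegral.integral_congr hpos, intervalIntegral.integral_sub intervalIntegrable_const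
    ((continuous_id'.div_const c).intervalIntegrable _ _), intervalIntegral.integral_div, integral_id]
  simp only [intervalIntegral.integral_const, smul_eq_mul]
  ring

lemma integral_max_one_sub_div_of_ge {b c : ℝ} (hc : 0 < c) (hcb : c ≤ b) :
    ∫ t in (0:ℝ)..b, max (1 - t / c) 0 = c / 2 := by
  have hint : Continuous fun t => max (1 - t / c) 0 := by fun_prop
  have htail : EqOn (fun t => max (1 - t / c) 0) 0 (uIcc c b) := by
    intro t ht
    rw [uIcc_of_le hcb] at ht
    exact max_eq_right (sub_nonpos.mpr ((one_le_div hc).mpr ht.1))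
  rw [← intervalIntegral.integral_add_adjacent_intervals (hint.intervalIntegrable 0 c)
    (hint.intervalIntegrable c b), intervalIntegral.integral_congr htail,
    integral_max_one_sub_div_of_le hc hc.le le_rfl, Pi.zero_def, intervalIntegral.integral_zero]
  field_simp
  ring

lemma mcp_eq {lam gam : ℝ} (hlam : 0 < lam) (hgam : 0 < gam) (θ : ℝ) :
    mcp lam gam θ = gam * lam ^ 2 / 2 - max (gam * lam - |θ|) 0 ^ 2 / (2 * gam) := by
  have hc : 0 < gam * lam := mul_pos hgam hlam
  rw [mcp]
  rcases le_total |θ| (gam * lam) with h | h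
  · rw [integral_max_one_sub_div_of_le hc (abs_nonneg θ) h, max_eq_left (sub_nonneg.mpr h)]
    field_simp
    ring
  · rw [integral_max_one_sub_div_of_ge hc h, max_eq_right (sub_nonpos.mpr h)]
    field_simp
    ring

lemma mcp_abs (lam gam θ : ℝ) : mcp lam gam |θ| = mcp lam gam θ := by
  rw [mcp, mcp, abs_abs]

lemma mul_le_sq_div_add_mul_max_sq {μ t : ℝ} (b : ℝ) (hμ : 0 < μ) (ht : 0 ≤ t) :
    b * t ≤ t ^ 2 / (2 * μ) + μ * max b 0 ^ 2 / 2 := by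
  rcases le_total b 0 with hb | hb
  · rw [max_eq_right hb, zero_pow two_ne_zero, mul_zero, zero_div, add_zero]
    exact (mul_nonpos_of_nonpos_of_nonneg hb ht).trans (by positivity)
  · rw [max_eq_left hb]
    have : 0 ≤ (t - μ * b) ^ 2 / (2 * μ) := by positivity
    have e : (t - μ * b) ^ 2 / (2 * μ) = t ^ 2 / (2 * μ) + μ * b ^ 2 / 2 - b * t := by
      field_simp
      ring
    linarith

lemma max_zero_sq_le_sq (a : ℝ) : max a 0 ^ 2 ≤ a ^ 2 := by
  rcases le_total a 0 with h | h
  · rw [max_eq_right h]; simpa using sq_nonneg a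
  · rw [max_eq_left h]

lemma half_sq_abs_sub_abs_add_mcp_le (lam gam x θ : ℝ) :
    1 / 2 * (|x| - |θ|) ^ 2 + mcp lam gam |θ| ≤ 1 / 2 * (x - θ) ^ 2 + mcp lam gam θ := by
  have h : (|x| - |θ|) ^ 2 ≤ (x - θ) ^ 2 :=
    sq_le_sq.mpr (by simpa using abs_abs_sub_abs_le_abs_sub x θ)
  rw [mcp_abs]
  linarith

lemma sq_sub_sign_mul {x s : ℝ} (hs : x = 0 → s = 0) :
    (x - Real.sign x * s) ^ 2 = (|x| - s) ^ 2 := by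
  rcases lt_trichotomy x 0 with hx | rfl | hx
  · rw [Real.sign_of_neg hx, abs_of_neg hx]; ring
  · simp [hs rfl]
  · rw [Real.sign_of_pos hx, abs_of_pos hx]; ring

lemma abs_sign_mul {x s : ℝ} (hs : x = 0 → s = 0) (hs0 : 0 ≤ s) :
    |Real.sign x * s| = s := by
  rcases lt_trichotomy x 0 with hx | rfl | hx
  · simp [Real.sign_of_neg hx, abs_of_nonneg hs0]
  · simp [hs rfl]
  · simp [Real.sign_of_pos hx, abs_of_nonneg hs0]

lemma mcp_prox_of_nonneg {lam gam a t : ℝ} (hlam : 0 < lam) (hgam : 1 < gam)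
    (ha : a ≤ lam * gam) (ht : 0 ≤ t) :
    1 / 2 * (a - gam / (gam - 1) * max (a - lam) 0) ^ 2
        + mcp lam gam (gam / (gam - 1) * max (a - lam) 0)
      ≤ 1 / 2 * (a - t) ^ 2 + mcp lam gam t := by
  have hgam0 : 0 < gam := by linarith
  have hgam1 : 0 < gam - 1 := by linarith
  set μ := gam / (gam - 1) with hμ
  set m := max (a - lam) 0
  have hμ0 : 0 < μ := by positivity
  have hm : m ≤ (gam - 1) * lam := max_le (by linarith) (by positivity)
  have hμm : μ * m ≤ gam * lam := by
    calc μ * m ≤ μ * ((gam - 1) * lam) := by gcongr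
      _ = gam * lam := by rw [hμ]; field_simp
  have hmm : m * (a - lam) = m ^ 2 := by
    rcases le_total (a - lam) 0 with h | h <;> simp [m, h, sq]
  rw [mcp_eq hlam hgam0, mcp_eq hlam hgam0, abs_of_nonneg (by positivity),
    abs_of_nonneg ht, max_eq_left (sub_nonneg.mpr hμm)]
  have hyoung : (a - lam) * t ≤ t ^ 2 / (2 * μ) + μ * m ^ 2 / 2 :=
    mul_le_sq_div_add_mul_max_sq (a - lam) hμ0 ht
  have hcut := max_zero_sq_le_sq (gam * lam - t)
  linear_combination (norm := skip) hyoung + hcut / (2 * gam) - μ * hmm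
  rw [hμ]
  field_simp
  exact le_of_eq (by ring)

lemma mcp_le_half_sq_sub_add_mcp {lam gam x : ℝ} (hlam : 0 < lam) (hgam : 1 ≤ gam)
    (hx : lam * gam < |x|) (θ : ℝ) :
    mcp lam gam x ≤ 1 / 2 * (x - θ) ^ 2 + mcp lam gam θ := by
  have hgam0 : 0 < gam := by linarith
  have hcut : max (gam * lam - |θ|) 0 ≤ |x - θ| :=
    max_le (by linarith [abs_sub_abs_le_abs_sub x θ]) (abs_nonneg _)
  have hsq : max (gam * lam - |θ|) 0 ^ 2 ≤ gam * (x - θ) ^ 2 :=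
    calc max (gam * lam - |θ|) 0 ^ 2 ≤ |x - θ| ^ 2 := by gcongr
      _ = 1 * (x - θ) ^ 2 := by rw [sq_abs, one_mul]
      _ ≤ gam * (x - θ) ^ 2 := by gcongr
  have hdiv : max (gam * lam - |θ|) 0 ^ 2 / (2 * gam) ≤ 1 / 2 * (x - θ) ^ 2 := by
    rw [div_le_iff₀ (by positivity)]
    linarith
  rw [mcp_eq hlam hgam0, mcp_eq hlam hgam0, max_eq_right (by linarith), zero_pow two_ne_zero,
    zero_div, sub_zero]
  linarith

/-- The minimizer of `θ ↦ (1/2)(x-θ)² + P^MCP_{λ,γ}(θ)` equals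
`(γ/(γ-1))·sign(x)·(|x|-λ)₊` when `|x| ≤ λγ`, and equals `x` when `|x| > λγ`. -/
theorem mcp_prox (lam gam x : ℝ) (hlam : 0 < lam) (hgam : 1 < gam) :
    (|x| ≤ lam * gam →
      ∀ θ : ℝ,
        (1/2) * (x - (gam/(gam-1)) * (Real.sign x * max (|x| - lam) 0))^2
            + mcp lam gam ((gam/(gam-1)) * (Real.sign x * max (|x| - lam) 0))
          ≤ (1/2) * (x - θ)^2 + mcp lam gam θ) ∧
    (lam * gam < |x| →
      ∀ θ : ℝ,
        (1/2) * (x - x)^2 + mcp lam gam x ≤ (1/2) * (x - θ)^2 + mcp lam gam θ) := by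
  refine ⟨fun hx θ => ?_, fun hx θ => by simpa using mcp_le_half_sq_sub_add_mcp hlam hgam.le hx θ⟩
  set s := gam / (gam - 1) * max (|x| - lam) 0
  have hs0 : 0 ≤ s := mul_nonneg (div_nonneg (by linarith) (by linarith)) (le_max_right _ _)
  have hs : x = 0 → s = 0 := by
    rintro rfl
    simp [s, hlam.le]
  calc _ = 1 / 2 * (|x| - s) ^ 2 + mcp lam gam s := by
        rw [mul_left_comm, sq_sub_sign_mul hs, ← mcp_abs, abs_sign_mul hs hs0]
    _ ≤ 1 / 2 * (|x| - |θ|) ^ 2 + mcp lam gam |θ| := mcp_prox_of_nonneg hlam hgam hx (abs_nonneg θ)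
    _ ≤ 1 / 2 * (x - θ) ^ 2 + mcp lam gam θ := half_sq_abs_sub_abs_add_mcp_le lam gam x θ
end

section
/- Fix a symmetric matrix Q and ψ > 0. The minimizer over symmetric positive definite Θ of tr(QΘ) - log det(Θ) + ψ‖Θ‖_F² is Θ* = (-Q + (Q² + 4ψ·2·I)^{1/2})/(4ψ), i.e., the unique positive definite solution of 2ψΘ² + QΘ = I obtained by the spectral mapping λ ↦ (-q + √(q² + 8ψ))/(4ψ) applied to the eigenvalues q of Q. -/
/-!
Put `A = 2ψ Θ₀ + Q`. A positive definite solution `Θ₀` of `2ψΘ² + QΘ = I` satisfies `A Θ₀ = I`,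
so `A = Θ₀⁻¹` is positive definite, and expanding the objective `f` around `Θ₀` gives, for every
positive definite `Θ`,
  `f Θ - f Θ₀ = (tr (A Θ) - p - log det (A Θ)) + ψ ‖Θ - Θ₀‖_F²`.
The bracket is nonnegative: writing `A = Cᴴ C`, the matrix `A Θ` has the trace and determinant of
the positive definite `C Θ Cᴴ`, and `log λ ≤ λ - 1` for each of its eigenvalues. Hence any positive
definite solution is the unique minimizer, which yields both optimality and uniqueness. Existence
is spectral: `Θ*` and `Q` are diagonal in the orthonormal basis `u`, and each eigenvalue of `Θ*` is
the positive root of `2ψ t² + q t = 1`.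
-/

open Matrix Real

namespace Matrix

theorem sum_smul_vecMulVec_self {m n S : Type*} [Fintype m] [DecidableEq m] [CommSemiring S]
    (u : m → n → S) (c : m → S) :
    ∑ j, c j • vecMulVec (u j) (u j) = (of u)ᵀ * diagonal c * of u := by
  ext i k
  rw [mul_apply, sum_apply]
  simp only [smul_apply, vecMulVec_apply, smul_eq_mul, mul_diagonal, transpose_apply, of_apply]
  exact Finset.sum_congr rfl fun j _ => by ring

variable {n : Type*} [Fintype n]

section Orthonormal

variable [DecidableEq n] {R : Type*} [CommRing R] [StarRing R] [TrivialStar R] {u : n → n → R}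

theorem transpose_of_mem_unitaryGroup (hu : ∀ i j, u i ⬝ᵥ u j = if i = j then 1 else 0) :
    (of u)ᵀ ∈ unitaryGroup n R := by
  rw [mem_unitaryGroup_iff', star_eq_conjTranspose, conjTranspose_eq_transpose_of_trivial,
    transpose_transpose]
  ext i j
  simpa [mul_apply, one_apply, dotProduct] using hu i j

theorem sum_smul_vecMulVec_self_eq_conjStarAlgAut
    (hu : ∀ i j, u i ⬝ᵥ u j = if i = j then 1 else 0) (c : n → R) :
    ∑ j, c j • vecMulVec (u j) (u j)
      = Unitary.conjStarAlgAut R _ ⟨(of u)ᵀ, transpose_of_mem_unitaryGroup hu⟩ (diagonal c) := by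
  rw [sum_smul_vecMulVec_self, Unitary.conjStarAlgAut_apply, star_eq_conjTranspose,
    conjTranspose_eq_transpose_of_trivial, transpose_transpose]

end Orthonormal

section LogDet

variable [DecidableEq n]

theorem PosDef.log_det_le_trace_sub_card {P : Matrix n n ℝ} (hP : P.PosDef) :
    log P.det ≤ P.trace - Fintype.card n := by
  have hev := hP.eigenvalues_pos
  rw [hP.isHermitian.det_eq_prod_eigenvalues, hP.isHermitian.trace_eq_sum_eigenvalues]
  simp only [RCLike.ofReal_real_eq_id, id_eq]
  rw [log_prod fun i _ => (hev i).ne']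
  calc ∑ i, log (hP.isHermitian.eigenvalues i)
      ≤ ∑ i, (hP.isHermitian.eigenvalues i - 1) :=
        Finset.sum_le_sum fun i _ => log_le_sub_one_of_pos (hev i)
    _ = ∑ i, hP.isHermitian.eigenvalues i - Fintype.card n := by
        simp [Finset.sum_sub_distrib]

open scoped MatrixOrder in
theorem PosDef.log_det_mul_le {A B : Matrix n n ℝ} (hA : A.PosDef) (hB : B.PosDef) :
    log (A * B).det ≤ (A * B).trace - Fintype.card n := by
  obtain ⟨C, hC, rfl⟩ := CStarAlgebra.isStrictlyPositive_iff_eq_star_mul_self.mp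
    hA.isStrictlyPositive
  have hCBC : (C * B * star C).PosDef := (IsUnit.posDef_star_right_conjugate_iff hC).mpr hB
  have hdet : (star C * C * B).det = (C * B * star C).det := by
    rw [det_mul, det_mul, det_mul, det_mul]; ring
  rw [hdet, ← trace_mul_cycle]
  exact hCBC.log_det_le_trace_sub_card

end LogDet

section Hermitian

variable {R : Type*} [PartialOrder R] [Ring R] [StarRing R] [StarOrderedRing R] {X : Matrix n n R}

theorem IsHermitian.trace_mul_self_nonneg (hX : X.IsHermitian) : 0 ≤ (X * X).trace := by
  simpa only [hX.eq] using (posSemidef_conjTranspose_mul_self X).trace_nonneg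

theorem IsHermitian.trace_mul_self_eq_zero_iff [NoZeroDivisors R] (hX : X.IsHermitian) :
    (X * X).trace = 0 ↔ X = 0 := by
  simpa only [hX.eq] using trace_conjTranspose_mul_self_eq_zero_iff (A := X)

end Hermitian

end Matrix

section RidgeLogDet

variable {n : Type*} [Fintype n] [DecidableEq n]

noncomputable def ridgeLogDetLoss (Q : Matrix n n ℝ) (ψ : ℝ) (Θ : Matrix n n ℝ) : ℝ :=
  (Q * Θ).trace - log Θ.det + ψ * (Θ * Θ).trace

variable {Q Θ₀ Θ : Matrix n n ℝ} {ψ : ℝ}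

theorem ridgeLogDetLoss_add_le (hΘ₀ : Θ₀.PosDef) (hstat : (2 * ψ) • Θ₀ ^ 2 + Q * Θ₀ = 1)
    (hΘ : Θ.PosDef) :
    ridgeLogDetLoss Q ψ Θ₀ + ψ * ((Θ - Θ₀) * (Θ - Θ₀)).trace ≤ ridgeLogDetLoss Q ψ Θ := by
  set A := (2 * ψ) • Θ₀ + Q
  have hAΘ₀ : A * Θ₀ = 1 := by rwa [add_mul, smul_mul_assoc, ← sq]
  have hA : A.PosDef := inv_eq_left_inv hAΘ₀ ▸ hΘ₀.inv
  have hlog := hA.log_det_mul_le hΘ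
  have hlogA : log A.det = - log Θ₀.det := by
    have := congrArg (fun M => log M.det) hAΘ₀
    simp only [det_mul, det_one, log_one, log_mul hA.det_pos.ne' hΘ₀.det_pos.ne'] at this
    linarith
  have hcard : (Fintype.card n : ℝ) = 2 * ψ * (Θ₀ * Θ₀).trace + (Q * Θ₀).trace := by
    rw [← trace_one, ← hAΘ₀, add_mul, trace_add, smul_mul_assoc, trace_smul, smul_eq_mul]
  rw [det_mul, log_mul hA.det_pos.ne' hΘ.det_pos.ne', hlogA, hcard, add_mul, trace_add,
    smul_mul_assoc, trace_smul, smul_eq_mul] at hlog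
  simp only [ridgeLogDetLoss, sub_mul, mul_sub, trace_sub, trace_mul_comm Θ Θ₀]
  linarith

theorem ridgeLogDetLoss_le (hψ : 0 ≤ ψ) (hΘ₀ : Θ₀.PosDef)
    (hstat : (2 * ψ) • Θ₀ ^ 2 + Q * Θ₀ = 1) (hΘ : Θ.PosDef) :
    ridgeLogDetLoss Q ψ Θ₀ ≤ ridgeLogDetLoss Q ψ Θ := by
  have := (hΘ.isHermitian.sub hΘ₀.isHermitian).trace_mul_self_nonneg
  linarith [ridgeLogDetLoss_add_le hΘ₀ hstat hΘ, mul_nonneg hψ this]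

theorem eq_of_ridgeLogDetLoss_le (hψ : 0 < ψ) (hΘ₀ : Θ₀.PosDef)
    (hstat : (2 * ψ) • Θ₀ ^ 2 + Q * Θ₀ = 1) (hΘ : Θ.PosDef)
    (hle : ridgeLogDetLoss Q ψ Θ ≤ ridgeLogDetLoss Q ψ Θ₀) : Θ = Θ₀ := by
  have hX := hΘ.isHermitian.sub hΘ₀.isHermitian
  have hnonpos : ψ * ((Θ - Θ₀) * (Θ - Θ₀)).trace ≤ 0 := by
    linarith [ridgeLogDetLoss_add_le hΘ₀ hstat hΘ]
  have hzero : ((Θ - Θ₀) * (Θ - Θ₀)).trace = 0 :=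
    le_antisymm (nonpos_of_mul_nonpos_right hnonpos hψ) hX.trace_mul_self_nonneg
  exact sub_eq_zero.mp (hX.trace_mul_self_eq_zero_iff.mp hzero)

end RidgeLogDet

theorem quadratic_root_pos {ψ : ℝ} (hψ : 0 < ψ) (x : ℝ) :
    0 < (-x + √(x ^ 2 + 8 * ψ)) / (4 * ψ) := by
  have : x < √(x ^ 2 + 8 * ψ) :=
    calc x ≤ |x| := le_abs_self x
      _ = √(x ^ 2) := (sqrt_sq_eq_abs x).symm
      _ < √(x ^ 2 + 8 * ψ) := sqrt_lt_sqrt (sq_nonneg x) (by linarith)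
  apply div_pos <;> linarith

theorem quadratic_root_eq {ψ : ℝ} (hψ : 0 < ψ) (x : ℝ) :
    2 * ψ * ((-x + √(x ^ 2 + 8 * ψ)) / (4 * ψ)) ^ 2 + x * ((-x + √(x ^ 2 + 8 * ψ)) / (4 * ψ))
      = 1 := by
  have hs := sq_sqrt (show 0 ≤ x ^ 2 + 8 * ψ by positivity)
  set s := √(x ^ 2 + 8 * ψ)
  field_simp
  linear_combination 2 * hs

theorem admm_theta_update_general {p : ℕ} (Q : Matrix (Fin p) (Fin p) ℝ)
    (ψ : ℝ) (hψ : 0 < ψ) (q : Fin p → ℝ) (u : Fin p → Fin p → ℝ)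
    (hortho : ∀ i j, u i ⬝ᵥ u j = if i = j then (1 : ℝ) else 0)
    (hdecomp : Q = ∑ j, q j • Matrix.vecMulVec (u j) (u j))
    (Θstar : Matrix (Fin p) (Fin p) ℝ)
    (hΘstar : Θstar = ∑ j, ((-q j + Real.sqrt ((q j)^2 + 8 * ψ)) / (4 * ψ)) •
      Matrix.vecMulVec (u j) (u j)) :
    Θstar.PosDef ∧ ((2 * ψ) • Θstar ^ 2 + Q * Θstar = 1) ∧
    (∀ Θ : Matrix (Fin p) (Fin p) ℝ, Θ.PosDef → (2 * ψ) • Θ ^ 2 + Q * Θ = 1 → Θ = Θstar) ∧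
    (∀ Θ : Matrix (Fin p) (Fin p) ℝ, Θ.IsSymm → Θ.PosDef →
      ((Q * Θstar).trace - Real.log Θstar.det + ψ * (Θstar * Θstar).trace
        ≤ (Q * Θ).trace - Real.log Θ.det + ψ * (Θ * Θ).trace) ∧
      ((Q * Θ).trace - Real.log Θ.det + ψ * (Θ * Θ).trace
        = (Q * Θstar).trace - Real.log Θstar.det + ψ * (Θstar * Θstar).trace → Θ = Θstar)) := by
  have hspec := sum_smul_vecMulVec_self_eq_conjStarAlgAut hortho
  have hpd : Θstar.PosDef := by
    rw [hΘstar, hspec, Unitary.conjStarAlgAut_apply]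
    exact (IsUnit.posDef_star_right_conjugate_iff Unitary.isUnit_coe).mpr
      (posDef_diagonal_iff.mpr fun j => quadratic_root_pos hψ (q j))
  have hroot : (2 * ψ) • (fun j => (-q j + √(q j ^ 2 + 8 * ψ)) / (4 * ψ)) ^ 2
      + q * (fun j => (-q j + √(q j ^ 2 + 8 * ψ)) / (4 * ψ)) = 1 :=
    funext fun j => by simpa using quadratic_root_eq hψ (q j)
  have hsol : (2 * ψ) • Θstar ^ 2 + Q * Θstar = 1 := by
    rw [hΘstar, hdecomp, hspec, hspec, ← diagonalAlgHom_apply ℝ, ← diagonalAlgHom_apply ℝ]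
    simp only [← map_pow, ← map_smul, ← map_mul, ← map_add]
    rw [hroot, map_one, map_one]
  refine ⟨hpd, hsol, fun Θ hΘ hstat => ?_, fun Θ _ hΘ => ⟨?_, fun heq => ?_⟩⟩
  · exact eq_of_ridgeLogDetLoss_le hψ hpd hsol hΘ (ridgeLogDetLoss_le hψ.le hΘ hstat hpd)
  · exact ridgeLogDetLoss_le hψ.le hpd hsol hΘ
  · exact eq_of_ridgeLogDetLoss_le hψ hpd hsol hΘ heq.le

/-- Closed-form Θ-update of the ADMM algorithm: for symmetric `Q = Σ_j q_j u_j u_jᵀ`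
(orthonormal `u_j`) and `ψ > 0`, the matrix
`Θ* = Σ_j ((-q_j + √(q_j² + 8ψ))/(4ψ)) u_j u_jᵀ`, i.e. `(-Q + √(Q² + 8ψI))/(4ψ)`, is
positive definite, is the unique solution of `2ψΘ² + QΘ = I`, and is the unique minimizer
of `Θ ↦ tr(QΘ) - log det Θ + ψ‖Θ‖_F²` over symmetric positive definite matrices. -/
theorem admm_theta_update {p : ℕ} (Q : Matrix (Fin p) (Fin p) ℝ) (hQ : Q.IsSymm)
    (ψ : ℝ) (hψ : 0 < ψ) (q : Fin p → ℝ) (u : Fin p → Fin p → ℝ)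
    (hortho : ∀ i j, u i ⬝ᵥ u j = if i = j then (1 : ℝ) else 0)
    (hdecomp : Q = ∑ j, q j • Matrix.vecMulVec (u j) (u j))
    (Θstar : Matrix (Fin p) (Fin p) ℝ)
    (hΘstar : Θstar = ∑ j, ((-q j + Real.sqrt ((q j)^2 + 8 * ψ)) / (4 * ψ)) •
      Matrix.vecMulVec (u j) (u j)) :
    Θstar.PosDef ∧ ((2 * ψ) • Θstar ^ 2 + Q * Θstar = 1) ∧
    (∀ Θ : Matrix (Fin p) (Fin p) ℝ, Θ.PosDef → (2 * ψ) • Θ ^ 2 + Q * Θ = 1 → Θ = Θstar) ∧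
    (∀ Θ : Matrix (Fin p) (Fin p) ℝ, Θ.IsSymm → Θ.PosDef →
      ((Q * Θstar).trace - Real.log Θstar.det + ψ * (Θstar * Θstar).trace
        ≤ (Q * Θ).trace - Real.log Θ.det + ψ * (Θ * Θ).trace) ∧
      ((Q * Θ).trace - Real.log Θ.det + ψ * (Θ * Θ).trace
        = (Q * Θstar).trace - Real.log Θstar.det + ψ * (Θstar * Θstar).trace → Θ = Θstar)) :=
  admm_theta_update_general Q ψ hψ q u hortho hdecomp Θstar hΘstar
end

section
/- Let A be a p×p real symmetric matrix with eigendecomposition A = Σ_j σ_j u_j u_jᵀ and let δ > 0. Then [A, δ]₊ := Σ_j max(σ_j, δ) u_j u_jᵀ is the unique minimizer of ‖Γ - A‖_F² over symmetric matrices Γ with smallest eigenvalue at least δ. -/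
/-!
Write `A = Uᵀ D U` with `U = of u` orthogonal and `D = diagonal σ`. Conjugation by `U` preserves
the Frobenius norm and the constraint `Γ - δ I ⪰ 0`, so it suffices to project `D` onto the
matrices `M` with `M - δ I ⪰ 0`. Such an `M` has all diagonal entries `≥ δ`, and entrywise
`(M - D)ᵢⱼ²` is then at least its value at `M = diagonal (max σ δ)`, with equality only there.
-/

open Matrix

theorem sq_max_sub_le_sq_sub {s d t : ℝ} (ht : d ≤ t) : (max s d - s) ^ 2 ≤ (t - s) ^ 2 := by
  rcases le_total d s with hds | hsd
  · rw [max_eq_left hds, sub_self, zero_pow two_ne_zero]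
    exact sq_nonneg _
  · rw [max_eq_right hsd]
    nlinarith

theorem eq_max_of_sq_sub_eq {s d t : ℝ} (ht : d ≤ t) (h : (t - s) ^ 2 = (max s d - s) ^ 2) :
    t = max s d := by
  rcases le_total d s with hds | hsd
  · rw [max_eq_left hds] at h ⊢
    nlinarith
  · rw [max_eq_right hsd] at h ⊢
    nlinarith

namespace Matrix

theorem sum_smul_vecMulVec_self_eq {m n R : Type*} [Fintype m] [DecidableEq m] [CommSemiring R]
    (u : m → n → R) (c : m → R) :
    ∑ j, c j • vecMulVec (u j) (u j) = (of u)ᵀ * diagonal c * of u := by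
  ext i k
  simp only [sum_apply, smul_apply, vecMulVec_apply, smul_eq_mul, mul_apply, transpose_apply,
    of_apply, diagonal_apply, mul_ite, mul_zero, Finset.sum_ite_eq', Finset.mem_univ, if_true]
  exact Finset.sum_congr rfl fun j _ => by ring

theorem trace_transpose_mul_self_eq_sum_sq {m n R : Type*} [Fintype m] [Fintype n]
    [CommSemiring R] (N : Matrix m n R) :
    (Nᵀ * N).trace = ∑ i, ∑ j, N i j ^ 2 := by
  simp only [trace, diag_apply, mul_apply, transpose_apply, sq]
  exact Finset.sum_comm

theorem isSymm_transpose_mul_mul {n R : Type*} [Fintype n] [CommSemiring R] (U : Matrix n n R)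
    {A : Matrix n n R} (hA : A.IsSymm) : (Uᵀ * A * U).IsSymm := by
  rw [IsSymm, transpose_mul, transpose_mul, transpose_transpose, hA.eq, mul_assoc]

section Orthogonal

variable {n R : Type*} [Fintype n] [DecidableEq n] [CommRing R] {U : Matrix n n R}

theorem eq_transpose_mul_mul (hU : U * Uᵀ = 1) (A : Matrix n n R) :
    A = Uᵀ * (U * A * Uᵀ) * U := by
  rw [← mul_assoc, ← mul_assoc, mul_eq_one_comm.mp hU, one_mul, mul_assoc,
    mul_eq_one_comm.mp hU, mul_one]

theorem transpose_mul_mul_sub_smul_one (hU : U * Uᵀ = 1) (A : Matrix n n R) (c : R) :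
    Uᵀ * A * U - c • 1 = Uᵀ * (A - c • 1) * U := by
  rw [mul_sub, sub_mul, Matrix.mul_smul, mul_one, smul_mul, mul_eq_one_comm.mp hU]

theorem trace_transpose_mul_self_conj (hU : U * Uᵀ = 1) (N : Matrix n n R) :
    ((Uᵀ * N * U)ᵀ * (Uᵀ * N * U)).trace = (Nᵀ * N).trace := by
  have hsq : (Uᵀ * N * U)ᵀ * (Uᵀ * N * U) = Uᵀ * (Nᵀ * N) * U := by
    simp only [transpose_mul, transpose_transpose, mul_assoc]
    rw [← mul_assoc U, hU, one_mul]
  rw [hsq, trace_mul_cycle, hU, one_mul]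

theorem posSemidef_transpose_mul_mul_iff [PartialOrder R] [StarRing R] [TrivialStar R]
    (hU : U * Uᵀ = 1) {A : Matrix n n R} :
    (Uᵀ * A * U).PosSemidef ↔ A.PosSemidef := by
  rw [← conjTranspose_eq_transpose_of_trivial, ← star_eq_conjTranspose]
  exact (IsUnit.of_mul_eq_one _ hU).posSemidef_star_left_conjugate_iff

end Orthogonal

section DiagonalProjection

variable {n : Type*} [DecidableEq n] {σ : n → ℝ} {δ : ℝ} {M : Matrix n n ℝ}

theorem sq_diagonal_max_sub_apply_le (hM : ∀ i, δ ≤ M i i) (i j : n) :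
    ((diagonal (fun k => max (σ k) δ) - diagonal σ) i j) ^ 2 ≤ ((M - diagonal σ) i j) ^ 2 := by
  rcases eq_or_ne i j with rfl | hij
  · simpa using sq_max_sub_le_sq_sub (s := σ i) (hM i)
  · simpa [hij] using sq_nonneg (M i j)

theorem apply_eq_diagonal_max_of_sq_eq (hM : ∀ i, δ ≤ M i i) (i j : n)
    (h : ((M - diagonal σ) i j) ^ 2 =
      ((diagonal (fun k => max (σ k) δ) - diagonal σ) i j) ^ 2) :
    M i j = diagonal (fun k => max (σ k) δ) i j := by
  rcases eq_or_ne i j with rfl | hij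
  · simpa using eq_max_of_sq_sub_eq (hM i) (by simpa using h)
  · simpa [hij] using h

theorem trace_sq_diagonal_max_sub_le [Fintype n] (hM : ∀ i, δ ≤ M i i) :
    ((diagonal (fun k => max (σ k) δ) - diagonal σ)ᵀ *
        (diagonal (fun k => max (σ k) δ) - diagonal σ)).trace ≤
      ((M - diagonal σ)ᵀ * (M - diagonal σ)).trace := by
  simp only [trace_transpose_mul_self_eq_sum_sq]
  exact Finset.sum_le_sum fun i _ => Finset.sum_le_sum fun j _ =>
    sq_diagonal_max_sub_apply_le hM i j

theorem eq_diagonal_max_of_trace_sq_eq [Fintype n] (hM : ∀ i, δ ≤ M i i)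
    (h : ((M - diagonal σ)ᵀ * (M - diagonal σ)).trace =
      ((diagonal (fun k => max (σ k) δ) - diagonal σ)ᵀ *
        (diagonal (fun k => max (σ k) δ) - diagonal σ)).trace) :
    M = diagonal (fun k => max (σ k) δ) := by
  simp only [trace_transpose_mul_self_eq_sum_sq] at h
  ext i j
  have hrow := (Finset.sum_eq_sum_iff_of_le fun i _ =>
    Finset.sum_le_sum fun j _ => sq_diagonal_max_sub_apply_le hM i j).mp h.symm i
    (Finset.mem_univ _)
  have hentry := (Finset.sum_eq_sum_iff_of_le fun j _ =>
    sq_diagonal_max_sub_apply_le hM i j).mp hrow j (Finset.mem_univ _)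
  exact apply_eq_diagonal_max_of_sq_eq hM i j hentry.symm

end DiagonalProjection

end Matrix

theorem eigenvalue_truncation_projection_general {p : ℕ} (A : Matrix (Fin p) (Fin p) ℝ)
    (δ : ℝ) (σ : Fin p → ℝ) (u : Fin p → Fin p → ℝ)
    (hortho : ∀ i j, u i ⬝ᵥ u j = if i = j then (1 : ℝ) else 0)
    (hdecomp : A = ∑ j, σ j • Matrix.vecMulVec (u j) (u j))
    (Γstar : Matrix (Fin p) (Fin p) ℝ)
    (hΓstar : Γstar = ∑ j, max (σ j) δ • Matrix.vecMulVec (u j) (u j)) :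
    Γstar.IsSymm ∧ (Γstar - δ • (1 : Matrix (Fin p) (Fin p) ℝ)).PosSemidef ∧
    (∀ Γ : Matrix (Fin p) (Fin p) ℝ, Γ.IsSymm →
      (Γ - δ • (1 : Matrix (Fin p) (Fin p) ℝ)).PosSemidef →
      (((Γstar - A)ᵀ * (Γstar - A)).trace ≤ ((Γ - A)ᵀ * (Γ - A)).trace) ∧
      (((Γ - A)ᵀ * (Γ - A)).trace = ((Γstar - A)ᵀ * (Γstar - A)).trace → Γ = Γstar)) := by
  have hU : of u * (of u)ᵀ = 1 := by
    ext i j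
    simpa [mul_apply, one_apply, dotProduct] using hortho i j
  rw [sum_smul_vecMulVec_self_eq] at hdecomp hΓstar
  subst hdecomp hΓstar
  generalize of u = U at hU ⊢
  refine ⟨isSymm_transpose_mul_mul U (isSymm_diagonal _), ?_, fun Γ _ hΓ => ?_⟩
  · rw [transpose_mul_mul_sub_smul_one hU, posSemidef_transpose_mul_mul_iff hU,
      smul_one_eq_diagonal, diagonal_sub, posSemidef_diagonal_iff]
    exact fun i => sub_nonneg.mpr (le_max_right _ _)
  obtain ⟨M, rfl⟩ : ∃ M, Γ = Uᵀ * M * U := ⟨_, eq_transpose_mul_mul hU Γ⟩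
  rw [transpose_mul_mul_sub_smul_one hU, posSemidef_transpose_mul_mul_iff hU] at hΓ
  have hM : ∀ i, δ ≤ M i i := fun i => by
    simpa [sub_nonneg] using hΓ.diag_nonneg (i := i)
  simp only [← mul_sub, ← sub_mul, trace_transpose_mul_self_conj hU]
  exact ⟨trace_sq_diagonal_max_sub_le hM,
    fun h => congrArg (Uᵀ * · * U) (eq_diagonal_max_of_trace_sq_eq hM h)⟩

/-- Closed-form Γ-update of the ADMM algorithm: for symmetric `A = Σ_j σ_j u_j u_jᵀ`
(orthonormal `u_j`) and `δ > 0`, the matrix `[A, δ]₊ = Σ_j max(σ_j, δ) u_j u_jᵀ` is the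
unique minimizer of `‖Γ - A‖_F²` over symmetric matrices `Γ` with smallest eigenvalue at
least `δ` (i.e. `Γ - δI` positive semidefinite). -/
theorem eigenvalue_truncation_projection {p : ℕ} (A : Matrix (Fin p) (Fin p) ℝ)
    (hA : A.IsSymm) (δ : ℝ) (hδ : 0 < δ) (σ : Fin p → ℝ) (u : Fin p → Fin p → ℝ)
    (hortho : ∀ i j, u i ⬝ᵥ u j = if i = j then (1 : ℝ) else 0)
    (hdecomp : A = ∑ j, σ j • Matrix.vecMulVec (u j) (u j))
    (Γstar : Matrix (Fin p) (Fin p) ℝ)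
    (hΓstar : Γstar = ∑ j, max (σ j) δ • Matrix.vecMulVec (u j) (u j)) :
    Γstar.IsSymm ∧ (Γstar - δ • (1 : Matrix (Fin p) (Fin p) ℝ)).PosSemidef ∧
    (∀ Γ : Matrix (Fin p) (Fin p) ℝ, Γ.IsSymm →
      (Γ - δ • (1 : Matrix (Fin p) (Fin p) ℝ)).PosSemidef →
      (((Γstar - A)ᵀ * (Γstar - A)).trace ≤ ((Γ - A)ᵀ * (Γ - A)).trace) ∧
      (((Γ - A)ᵀ * (Γ - A)).trace = ((Γstar - A)ᵀ * (Γstar - A)).trace → Γ = Γstar)) :=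
  eigenvalue_truncation_projection_general A δ σ u hortho hdecomp Γstar hΓstar
end
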